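/- arXiv:0809.0688 — 6 statements merged into one kernel-verified Lean document; each statement's English description precedes it below -/
import Mathlib

section
/- For all integers n and l with n ≥ x ≥ y ≥ 1-n and l ≥ 1 (x, y integers), the quantity f_{x,y}(l) = x^l·((x+1)^l - (x-1)^l) + y^l·((y-1)^l - (y+1)^l) is nonnegative. -/
/-!
Writing `D t = (t (t + 1)) ^ l - (t (t - 1)) ^ l`, the increment of `t ↦ (t (t + 1)) ^ l` from
`t - 1` to `t`, the quantity is `D x - D y`, so it suffices that `D` is monotone on `ℤ`. Since
`D (-t) = -D t`, the step `D t ≤ D (t + 1)` for negative `t` reduces to the one at `-t - 1 ≥ 0`.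
For `t ≥ 0` the step compares the increments of `z ↦ z ^ l` over the adjacent intervals
`[t (t - 1), t (t + 1)]` and `[t (t + 1), (t + 1) (t + 2)]`, of lengths `2t` and `2t + 2`; the
increment over the right-hand, longer interval is larger.
-/

theorem pow_sub_pow_le_pow_sub_pow {R : Type*} [CommRing R] [LinearOrder R] [IsStrictOrderedRing R]
    {a b c d : R} (n : ℕ) (ha : 0 ≤ a) (hab : a ≤ b) (hac : a ≤ c) (hbd : b ≤ d)
    (hlen : b - a ≤ d - c) :
    b ^ n - a ^ n ≤ d ^ n - c ^ n := by
  have hb : 0 ≤ b := ha.trans hab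
  have hsum_le : ∑ i ∈ Finset.range n, b ^ i * a ^ (n - 1 - i) ≤
      ∑ i ∈ Finset.range n, d ^ i * c ^ (n - 1 - i) :=
    Finset.sum_le_sum fun i _ ↦ mul_le_mul (pow_le_pow_left₀ hb hbd i)
      (pow_le_pow_left₀ ha hac _) (pow_nonneg ha _) (pow_nonneg (hb.trans hbd) _)
  have hsum_nonneg : 0 ≤ ∑ i ∈ Finset.range n, b ^ i * a ^ (n - 1 - i) :=
    Finset.sum_nonneg fun i _ ↦ mul_nonneg (pow_nonneg hb _) (pow_nonneg ha _)
  rw [← geom_sum₂_mul, ← geom_sum₂_mul]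
  exact mul_le_mul hsum_le hlen (sub_nonneg.2 hab) (hsum_nonneg.trans hsum_le)

def stepIncrement (l : ℕ) (t : ℤ) : ℤ := (t * (t + 1)) ^ l - (t * (t - 1)) ^ l

theorem stepIncrement_neg (l : ℕ) (t : ℤ) : stepIncrement l (-t) = -stepIncrement l t := by
  unfold stepIncrement
  ring

theorem stepIncrement_le_succ_of_nonneg (l : ℕ) {t : ℤ} (ht : 0 ≤ t) :
    stepIncrement l t ≤ stepIncrement l (t + 1) := by
  have hprod : 0 ≤ t * (t - 1) := by
    rcases ht.eq_or_lt with rfl | ht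
    · simp
    · nlinarith
  exact pow_sub_pow_le_pow_sub_pow (b := t * (t + 1)) (c := (t + 1) * (t + 1 - 1))
    (d := (t + 1) * (t + 1 + 1)) l hprod (by nlinarith) (by nlinarith) (by nlinarith)
    (by nlinarith)

theorem stepIncrement_monotone (l : ℕ) : Monotone (stepIncrement l) := by
  refine monotone_int_of_le_succ fun t ↦ ?_
  rcases le_or_gt 0 t with ht | ht
  · exact stepIncrement_le_succ_of_nonneg l ht
  · have h := stepIncrement_le_succ_of_nonneg l (t := -t - 1) (by omega)
    rw [show -t - 1 = -(t + 1) by ring, show -(t + 1) + 1 = -t by ring,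
      stepIncrement_neg, stepIncrement_neg] at h
    exact neg_le_neg_iff.1 h

theorem f_xy_nonneg_general (x y : ℤ) (l : ℕ) (hyx : y ≤ x) :
    0 ≤ x ^ l * ((x + 1) ^ l - (x - 1) ^ l) + y ^ l * ((y - 1) ^ l - (y + 1) ^ l) := by
  have hdiff : x ^ l * ((x + 1) ^ l - (x - 1) ^ l) + y ^ l * ((y - 1) ^ l - (y + 1) ^ l) =
      stepIncrement l x - stepIncrement l y := by
    simp only [stepIncrement, mul_pow]
    ring
  rw [hdiff]
  exact sub_nonneg.2 (stepIncrement_monotone l hyx)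

/-- For integers `n ≥ x ≥ y ≥ 1 - n` and integer `l ≥ 1`, the quantity
`f_{x,y}(l) = x^l·((x+1)^l - (x-1)^l) + y^l·((y-1)^l - (y+1)^l)` is nonnegative. -/
theorem f_xy_nonneg (n x y : ℤ) (l : ℕ) (hl : 1 ≤ l)
    (hxn : x ≤ n) (hyx : y ≤ x) (hy : 1 - n ≤ y) :
    0 ≤ x ^ l * ((x + 1) ^ l - (x - 1) ^ l) + y ^ l * ((y - 1) ^ l - (y + 1) ^ l) :=
  f_xy_nonneg_general x y l hyx
end

section
/- Let λ = (λ_1, …, λ_j) be a partition of n with λ_1 the largest part, and let l ≥ 1. Then M_{λ,2l} = Σ_{i=1}^{j} ((λ_i - i)^l (λ_i - i + 1)^l - i^l (i-1)^l) satisfies M_{λ,2l} ≤ n·(λ_1 - 1)^l · λ_1^{l-1}. -/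
/-!
Write `x = λ_i - i`; the `i`-th summand of `M_{λ,2l}` is `g x - g (i - 1)` with
`g y = (y (y + 1))^l`, a function of `|y + 1/2|`. If `x < 0` then `|x + 1/2| ≤ i - 1/2`
(as `λ_i ≥ 1`), so the summand is `≤ 0`. Otherwise `0 ≤ x ≤ λ_1 - 1` and `x + 1 ≤ λ_i`, so the
summand is at most `x^l (x + 1) (x + 1)^(l-1) ≤ λ_i (λ_1 - 1)^l λ_1^(l-1)`; summing,
`Σ λ_i = n`.
-/

open Finset

/-- `M (L, 2l) = Σ_{i=1}^{j} ((λ_i - i)^l (λ_i - i + 1)^l - i^l (i-1)^l)` where the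
partition `λ` is given as the list `L` of its parts (in non-increasing order). -/
def Mpow (l : ℕ) (L : List ℕ) : ℤ :=
  ∑ i ∈ Finset.range L.length,
    (((L.getD i 0 : ℤ) - (i + 1)) ^ l * ((L.getD i 0 : ℤ) - (i + 1) + 1) ^ l
      - ((i : ℤ) + 1) ^ l * (i : ℤ) ^ l)

theorem List.sum_range_map_getD {α M : Type*} [AddCommMonoid M] (L : List α) (d : α)
    (f : α → M) : ∑ i ∈ Finset.range L.length, f (L.getD i d) = (L.map f).sum := by
  rw [Finset.sum_range, ← Fin.sum_univ_fun_getElem]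
  simp

theorem List.le_headI_of_pairwise_ge {α : Type*} [Preorder α] [Inhabited α] {L : List α}
    (hL : L.Pairwise (· ≥ ·)) {q : α} (hq : q ∈ L) : q ≤ L.headI := by
  cases L with
  | nil => simp at hq
  | cons a L =>
    rcases List.mem_cons.mp hq with rfl | h
    · exact le_rfl
    · exact (List.pairwise_cons.mp hL).1 q h

theorem pow_le_mul_pow_sub_one {R : Type*} [Semiring R] [PartialOrder R] [IsOrderedRing R]
    {b : R} (hb : 1 ≤ b) (l : ℕ) : b ^ l ≤ b * b ^ (l - 1) := by
  rw [← pow_succ']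
  exact pow_le_pow_right₀ hb (by omega)

theorem Int.mul_add_one_nonneg (x : ℤ) : 0 ≤ x * (x + 1) := by
  rcases le_or_gt 0 x with h | h
  · positivity
  · nlinarith

theorem Int.pow_mul_add_one_pow_le {x y : ℤ} (hyx : -y - 1 ≤ x) (hxy : x ≤ y) (l : ℕ) :
    x ^ l * (x + 1) ^ l ≤ y ^ l * (y + 1) ^ l := by
  rw [← mul_pow, ← mul_pow]
  refine pow_le_pow_left₀ (Int.mul_add_one_nonneg x) ?_ l
  -- `y (y + 1) - x (x + 1) = (y - x) (x + y + 1)`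
  nlinarith

theorem Int.pow_mul_add_one_pow_le_mul {x p a : ℤ} (hx : 0 ≤ x) (hxp : x + 1 ≤ p) (hpa : p ≤ a)
    (l : ℕ) : x ^ l * (x + 1) ^ l ≤ p * ((a - 1) ^ l * a ^ (l - 1)) :=
  calc x ^ l * (x + 1) ^ l ≤ x ^ l * ((x + 1) * (x + 1) ^ (l - 1)) := by
        gcongr
        exact pow_le_mul_pow_sub_one (by omega) l
    _ ≤ (a - 1) ^ l * (p * a ^ (l - 1)) := by
        have ha : 0 ≤ a - 1 := by omega
        gcongr <;> omega
    _ = p * ((a - 1) ^ l * a ^ (l - 1)) := by ring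

theorem Mpow_summand_le (l : ℕ) {p a i : ℤ} (hi : 0 ≤ i) (hp : 1 ≤ p) (hpa : p ≤ a) :
    (p - (i + 1)) ^ l * (p - (i + 1) + 1) ^ l - (i + 1) ^ l * i ^ l
      ≤ p * ((a - 1) ^ l * a ^ (l - 1)) := by
  rcases lt_or_ge (p - (i + 1)) 0 with hneg | hnonneg
  · have hle := Int.pow_mul_add_one_pow_le (x := p - (i + 1)) (y := i) (by omega) (by omega) l
    have hrhs : 0 ≤ p * ((a - 1) ^ l * a ^ (l - 1)) := by
      apply mul_nonneg (by omega)
      apply mul_nonneg <;> apply pow_nonneg <;> omega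
    linarith
  · have hle := Int.pow_mul_add_one_pow_le_mul hnonneg (by omega) hpa l
    have hsub : 0 ≤ (i + 1) ^ l * i ^ l := by positivity
    linarith

theorem Mpow_le_general (n : ℕ) (L : List ℕ) (hpos : ∀ p ∈ L, 0 < p)
    (hsort : L.Pairwise (· ≥ ·)) (hsum : L.sum = n) (l : ℕ) :
    Mpow l L ≤ (n : ℤ) * ((L.headI : ℤ) - 1) ^ l * (L.headI : ℤ) ^ (l - 1) := by
  set C : ℤ := ((L.headI : ℤ) - 1) ^ l * (L.headI : ℤ) ^ (l - 1)
  calc Mpow l L ≤ ∑ i ∈ range L.length, (L.getD i 0 : ℤ) * C := by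
        refine sum_le_sum fun i hi => ?_
        have hmem : L.getD i 0 ∈ L := by
          rw [List.getD_eq_getElem _ _ (mem_range.mp hi)]
          exact List.getElem_mem _
        exact Mpow_summand_le l i.cast_nonneg (by exact_mod_cast hpos _ hmem)
          (by exact_mod_cast List.le_headI_of_pairwise_ge hsort hmem)
    _ = n * C := by
        rw [← sum_mul, List.sum_range_map_getD L 0 Nat.cast, ← Nat.cast_list_sum, hsum]
    _ = _ := by ring

/-- For a partition `λ = (λ_1, …, λ_j)` of `n` with largest part `λ_1`, and `l ≥ 1`,
`M_{λ,2l} ≤ n·(λ_1 - 1)^l · λ_1^{l-1}`. -/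
theorem Mpow_le (n : ℕ) (L : List ℕ) (hpos : ∀ p ∈ L, 0 < p)
    (hsort : L.Pairwise (· ≥ ·)) (hsum : L.sum = n) (l : ℕ) (hl : 1 ≤ l) :
    Mpow l L ≤ (n : ℤ) * ((L.headI : ℤ) - 1) ^ l * (L.headI : ℤ) ^ (l - 1) :=
  Mpow_le_general n L hpos hsort hsum l
end

section
/- For every integer n ≥ 1, every real c ≥ 0, and every t ≥ n(log n + c), we have Σ_{j=1}^{n-1} (n!/(n-j)!)^2 · (1/j!) · (1 - j/n)^{2t} ≤ 2·e^{-2c}. -/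
/-!
Since `n!/(n-j)! ≤ n^j` and `(1 - j/n)^{2t} ≤ e^{-2jt/n} ≤ n^{-2j} e^{-2jc}`, the `j`-th term is at
most `e^{-2jc}/j! ≤ e^{-2c}/j!`, and `Σ_{j ≥ 1} 1/j! = e - 1 ≤ 2`.
-/

open Finset Real

lemma sum_Icc_one_div_factorial_le_two (m : ℕ) :
    ∑ j ∈ Icc 1 m, (1 / (j.factorial : ℝ)) ≤ 2 := by
  have h := Complex.sum_div_factorial_le (α := ℝ) 1 (m + 1) one_pos
  have hIcc : ({j ∈ range (m + 1) | 1 ≤ j} : Finset ℕ) = Icc 1 m := by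
    ext j; simp [and_comm]
  simpa [hIcc] using h

lemma factorial_div_factorial_sub_le_pow {n k : ℕ} (hk : k ≤ n) :
    (n.factorial : ℝ) / (n - k).factorial ≤ (n : ℝ) ^ k := by
  rw [div_le_iff₀ (by positivity), ← Nat.factorial_mul_descFactorial hk, mul_comm]
  push_cast
  gcongr
  exact_mod_cast Nat.descFactorial_le_pow n k

lemma one_sub_rpow_le_exp_neg_mul {x s : ℝ} (hx : x ≤ 1) (hs : 0 ≤ s) :
    (1 - x) ^ s ≤ exp (-x * s) := by
  rw [exp_mul]
  exact rpow_le_rpow (by linarith) (one_sub_le_exp_neg x) hs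

lemma pow_mul_one_sub_div_rpow_le {x c t : ℝ} {j : ℕ} (hx : 0 < x) (hj : j ≤ x) (ht₀ : 0 ≤ t)
    (ht : x * (log x + c) ≤ t) :
    x ^ (2 * j) * (1 - j / x) ^ (2 * t) ≤ exp (-2 * j * c) := by
  have hpow : x ^ (2 * j) = exp (2 * j * log x) := by
    rw [← exp_log (pow_pos hx _), log_pow]; push_cast; rfl
  calc x ^ (2 * j) * (1 - j / x) ^ (2 * t)
      ≤ exp (2 * j * log x) * exp (-(j / x) * (2 * t)) := by
        rw [hpow]
        gcongr
        exact one_sub_rpow_le_exp_neg_mul ((div_le_one hx).2 hj) (by positivity)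
    _ ≤ exp (-2 * j * c) := by
        rw [← exp_add]
        gcongr
        have : (j / x) * (2 * (x * (log x + c))) ≤ (j / x) * (2 * t) := by gcongr
        rw [show (j / x) * (2 * (x * (log x + c))) = 2 * j * (log x + c) by field_simp] at this
        linarith

lemma term_le_inv_factorial_mul_exp {n j : ℕ} {c t : ℝ} (hj₁ : 1 ≤ j) (hjn : j ≤ n) (hc : 0 ≤ c)
    (ht : (n : ℝ) * (log n + c) ≤ t) :
    ((n.factorial : ℝ) / (n - j).factorial) ^ 2 * (1 / j.factorial) * (1 - (j : ℝ) / n) ^ (2 * t)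
      ≤ 1 / j.factorial * exp (-2 * c) := by
  have hn : (0 : ℝ) < n := by exact_mod_cast hj₁.trans hjn
  have ht₀ : 0 ≤ t := (mul_nonneg hn.le (add_nonneg (log_natCast_nonneg n) hc)).trans ht
  have hx₀ : 0 ≤ 1 - (j : ℝ) / n := sub_nonneg.2 ((div_le_one hn).2 (by exact_mod_cast hjn))
  calc ((n.factorial : ℝ) / (n - j).factorial) ^ 2 * (1 / j.factorial) * (1 - (j : ℝ) / n) ^ (2 * t)
      ≤ ((n : ℝ) ^ j) ^ 2 * (1 / j.factorial) * (1 - (j : ℝ) / n) ^ (2 * t) := by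
        gcongr
        exact factorial_div_factorial_sub_le_pow hjn
    _ = 1 / j.factorial * ((n : ℝ) ^ (2 * j) * (1 - (j : ℝ) / n) ^ (2 * t)) := by ring
    _ ≤ 1 / j.factorial * exp (-2 * j * c) := by
        gcongr
        exact pow_mul_one_sub_div_rpow_le hn (by exact_mod_cast hjn) ht₀ ht
    _ ≤ 1 / j.factorial * exp (-2 * c) := by
        gcongr
        nlinarith [(Nat.one_le_cast (α := ℝ)).2 hj₁]

theorem discrete_l2_bound_general (n : ℕ) (c t : ℝ) (hc : 0 ≤ c)
    (ht : (n : ℝ) * (Real.log n + c) ≤ t) :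
    ∑ j ∈ Finset.Icc 1 (n - 1),
      ((n.factorial : ℝ) / (n - j).factorial) ^ 2 * (1 / j.factorial)
        * (1 - (j : ℝ) / n) ^ (2 * t) ≤ 2 * Real.exp (-2 * c) := by
  calc _ ≤ ∑ j ∈ Icc 1 (n - 1), 1 / (j.factorial : ℝ) * exp (-2 * c) :=
        sum_le_sum fun j hj ↦ term_le_inv_factorial_mul_exp (mem_Icc.1 hj).1
          (by have := (mem_Icc.1 hj).2; omega) hc ht
    _ = (∑ j ∈ Icc 1 (n - 1), 1 / (j.factorial : ℝ)) * exp (-2 * c) := (sum_mul ..).symm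
    _ ≤ 2 * exp (-2 * c) := by
        gcongr
        exact sum_Icc_one_div_factorial_le_two _

/-- For every integer `n ≥ 1`, every real `c ≥ 0`, and every real `t ≥ n(log n + c)`,
`Σ_{j=1}^{n-1} (n!/(n-j)!)² · (1/j!) · (1 - j/n)^{2t} ≤ 2·e^{-2c}`. -/
theorem discrete_l2_bound (n : ℕ) (hn : 1 ≤ n) (c t : ℝ) (hc : 0 ≤ c)
    (ht : (n : ℝ) * (Real.log n + c) ≤ t) :
    ∑ j ∈ Finset.Icc 1 (n - 1),
      ((n.factorial : ℝ) / (n - j).factorial) ^ 2 * (1 / j.factorial)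
        * (1 - (j : ℝ) / n) ^ (2 * t) ≤ 2 * Real.exp (-2 * c) :=
  discrete_l2_bound_general n c t hc ht
end

section
/- Let B_j = (n!/(n-j)!)^2 · (1/j!) · (1 - j/n)^{n log n}. For n ≥ 9, Σ_{j=⌈n/2⌉}^{n-1} B_j ≤ exp(1 - (3/1000)·n·log n). -/
/-!
For `j ≥ n/2` we have `n - j ≤ n/2`, so the ratio
`B_{j+1} / B_j = (n-j)² / (j+1) · (1 - 1/(n-j))^{n log n} ≤ (n-j)² · exp(-2 log n)`
is at most `1/4`, and the sum is at most `(4/3) B_{⌈n/2⌉}`. Stirling's bounds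
`√π ≤ stirlingSeq k ≤ e/√2` then give `log B_{⌈n/2⌉} ≤ (1/2 - log 2) n log n + O(n)`,
and `1/2 - log 2 ≈ -0.19` beats `-0.003` as soon as `n ≥ 9`.
-/

open Real Finset
open scoped Nat

namespace Stirling

theorem log_factorial_le_stirling {n : ℕ} (hn : n ≠ 0) :
    log n ! ≤ n * log n - n + log n / 2 + 1 := by
  have hpos : 0 < stirlingSeq n := by
    obtain ⟨k, rfl⟩ := Nat.exists_eq_succ_of_ne_zero hn
    exact stirlingSeq'_pos k
  have hle : stirlingSeq n ≤ exp 1 / √2 := by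
    obtain ⟨k, rfl⟩ := Nat.exists_eq_succ_of_ne_zero hn
    simpa using stirlingSeq'_antitone (Nat.zero_le k)
  have hlog := log_le_log hpos hle
  rw [log_stirlingSeq_formula, log_div (exp_pos 1).ne' (by positivity), log_exp,
    log_sqrt zero_le_two, log_mul two_ne_zero (by positivity),
    log_div (by positivity) (exp_pos 1).ne', log_exp] at hlog
  linarith

theorem le_log_factorial {n : ℕ} (hn : n ≠ 0) :
    n * log n - n + log n / 2 + (1 + log 2) / 2 ≤ log n ! := by
  have h2π : log 2 + 1 ≤ log (2 * π) := by
    rw [← log_exp 1, ← log_mul two_ne_zero (exp_pos 1).ne']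
    exact log_le_log (by positivity) (by linarith [exp_one_lt_d9, pi_gt_three])
  linarith [le_log_factorial_stirling hn]

end Stirling

namespace Real

lemma log_add_one_le_log_add_inv {x : ℝ} (hx : 0 < x) : log (x + 1) ≤ log x + x⁻¹ := by
  have h := log_le_sub_one_of_pos (show 0 < (x + 1) / x by positivity)
  rw [log_div (by positivity) hx.ne', add_div, div_self hx.ne', one_div] at h
  linarith

lemma log_add_inv_le_log_add_one {x : ℝ} (hx : 0 < x) : log x + (x + 1)⁻¹ ≤ log (x + 1) := by
  have h := one_sub_inv_le_log_of_pos (show 0 < (x + 1) / x by positivity)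
  rw [log_div (by positivity) hx.ne', inv_div, one_sub_div (by positivity : x + 1 ≠ 0),
    add_sub_cancel_left, one_div] at h
  linarith

lemma rpow_le_exp_mul_sub_one {x y : ℝ} (hx : 0 ≤ x) (hy : 0 ≤ y) :
    x ^ y ≤ exp (y * (x - 1)) := by
  calc x ^ y ≤ exp (x - 1) ^ y := rpow_le_rpow hx (by linarith [add_one_le_exp (x - 1)]) hy
    _ = exp (y * (x - 1)) := by rw [← exp_mul, mul_comm]

end Real

lemma sum_Ico_le_div_one_sub_of_le_mul {f : ℕ → ℝ} {r : ℝ} {a b : ℕ}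
    (hr₀ : 0 ≤ r) (hr₁ : r < 1) (ha : 0 ≤ f a)
    (hf : ∀ i, a ≤ i → i + 1 < b → f (i + 1) ≤ r * f i) :
    ∑ i ∈ Ico a b, f i ≤ f a / (1 - r) := by
  have hgeom : ∀ i, a + i < b → f (a + i) ≤ r ^ i * f a := by
    intro i
    induction i with
    | zero => simp
    | succ i ih =>
      intro hi
      calc f (a + (i + 1)) ≤ r * f (a + i) := hf (a + i) (by omega) (by omega)
        _ ≤ r * (r ^ i * f a) := mul_le_mul_of_nonneg_left (ih (by omega)) hr₀
        _ = r ^ (i + 1) * f a := by ring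
  have hsum : ∑ i ∈ range (b - a), r ^ i ≤ 1 / (1 - r) := by
    have h := geom_sum_Ico_le_of_lt_one (m := 0) (n := b - a) hr₀ hr₁
    rwa [← range_eq_Ico, pow_zero] at h
  rw [sum_Ico_eq_sum_range]
  calc ∑ i ∈ range (b - a), f (a + i) ≤ ∑ i ∈ range (b - a), r ^ i * f a :=
        sum_le_sum fun i hi => hgeom i (by rw [mem_range] at hi; omega)
    _ = (∑ i ∈ range (b - a), r ^ i) * f a := (sum_mul ..).symm
    _ ≤ 1 / (1 - r) * f a := mul_le_mul_of_nonneg_right hsum ha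
    _ = f a / (1 - r) := by ring

noncomputable def Bj (n j : ℕ) : ℝ :=
  ((n ! : ℝ) / (n - j)!) ^ 2 * (1 / j !) * (1 - (j : ℝ) / n) ^ ((n : ℝ) * log n)

lemma one_sub_div_eq_cast_sub_div {n j : ℕ} (hj : j ≤ n) (hn : n ≠ 0) :
    1 - (j : ℝ) / n = ((n - j : ℕ) : ℝ) / n := by
  rw [Nat.cast_sub hj, sub_div, div_self (by exact_mod_cast hn)]

lemma Bj_nonneg {n j : ℕ} (hj : j ≤ n) : 0 ≤ Bj n j := by
  rcases Nat.eq_zero_or_pos n with rfl | hn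
  · simp [Bj]
  rw [Bj, one_sub_div_eq_cast_sub_div hj hn.ne']
  positivity

lemma Bj_pos {n j : ℕ} (hj : j < n) : 0 < Bj n j := by
  have hnj : (0 : ℝ) < (n - j : ℕ) := by exact_mod_cast Nat.sub_pos_of_lt hj
  have hn : (0 : ℝ) < n := by exact_mod_cast (show 0 < n by omega)
  rw [Bj, one_sub_div_eq_cast_sub_div hj.le (by omega)]
  have := rpow_pos_of_pos (div_pos hnj hn) ((n : ℝ) * log n)
  positivity

lemma Bj_succ {n j : ℕ} (hj : j < n) :
    Bj n (j + 1) = Bj n j * (((n - j : ℕ) : ℝ) ^ 2 / (j + 1) *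
      (1 - 1 / ((n - j : ℕ) : ℝ)) ^ ((n : ℝ) * log n)) := by
  obtain ⟨c, rfl⟩ := Nat.exists_eq_add_of_lt hj
  have hsub : j + c + 1 - j = c + 1 := by omega
  have hsub' : j + c + 1 - (j + 1) = c := by omega
  have hbase : 1 - ((j + 1 : ℕ) : ℝ) / (j + c + 1 : ℕ) =
      (1 - (j : ℝ) / (j + c + 1 : ℕ)) * (1 - 1 / ((c + 1 : ℕ) : ℝ)) := by
    push_cast
    field_simp
    ring
  simp only [Bj, hsub, hsub', hbase]
  rw [mul_rpow (by rw [one_sub_div_eq_cast_sub_div hj.le (by omega)]; positivity)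
    (by push_cast; rw [sub_nonneg, div_le_one (by positivity)]; linarith)]
  push_cast [Nat.factorial_succ]
  field_simp

lemma Bj_succ_le {n j : ℕ} (hj : j < n) (hn : n ≤ 2 * j) : Bj n (j + 1) ≤ 1 / 4 * Bj n j := by
  set c : ℝ := ((n - j : ℕ) : ℝ) with hc
  set L : ℝ := (n : ℝ) * log n with hL
  have hn₀ : (0 : ℝ) < n := by exact_mod_cast (show 0 < n by omega)
  have hc₁ : 1 ≤ c := by rw [hc]; exact_mod_cast (show 1 ≤ n - j by omega)
  have hcn : 2 * c ≤ n := by rw [hc]; exact_mod_cast (show 2 * (n - j) ≤ n by omega)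
  have hlogn : 0 ≤ log n := log_nonneg (by exact_mod_cast (show 1 ≤ n by omega))
  have hbase : 0 ≤ 1 - 1 / c := by rw [sub_nonneg, div_le_one (by linarith)]; exact hc₁
  have hdecay : (1 - 1 / c) ^ L ≤ ((n : ℝ) ^ 2)⁻¹ :=
    calc (1 - 1 / c) ^ L ≤ exp (L * (1 - 1 / c - 1)) :=
          rpow_le_exp_mul_sub_one hbase (by positivity)
      _ ≤ exp (-log ((n : ℝ) ^ 2)) := by
          gcongr
          rw [log_pow, hL, sub_sub_cancel_left, mul_neg, neg_le_neg_iff, mul_one_div,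
            le_div_iff₀ (by linarith)]
          push_cast
          nlinarith
      _ = ((n : ℝ) ^ 2)⁻¹ := by rw [exp_neg, exp_log (by positivity)]
  have hfactor : c ^ 2 / (j + 1) * (1 - 1 / c) ^ L ≤ 1 / 4 :=
    calc c ^ 2 / (j + 1) * (1 - 1 / c) ^ L ≤ c ^ 2 * ((n : ℝ) ^ 2)⁻¹ := by
          gcongr
          exact div_le_self (sq_nonneg c) (by linarith [(j.cast_nonneg : (0 : ℝ) ≤ j)])
      _ ≤ 1 / 4 := by
          rw [← div_eq_mul_inv, div_le_iff₀ (by positivity)]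
          nlinarith
  rw [Bj_succ hj, mul_comm (1 / 4)]
  exact mul_le_mul_of_nonneg_left hfactor (Bj_nonneg hj.le)

lemma log_Bj {n j k : ℕ} (hk : k ≠ 0) (hjk : j + k = n) :
    log (Bj n j) = 2 * log n ! - 2 * log k ! - log j ! + n * log n * log ((k : ℝ) / n) := by
  have hnj : n - j = k := by omega
  have hk₀ : (0 : ℝ) < k := by exact_mod_cast Nat.pos_of_ne_zero hk
  have hn₀ : (0 : ℝ) < n := by exact_mod_cast (show 0 < n by omega)
  rw [Bj, one_sub_div_eq_cast_sub_div (by omega) (by omega), hnj,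
    log_mul (by positivity) (by positivity), log_mul (by positivity) (by positivity), log_pow,
    log_div (by positivity) (by positivity), one_div, log_inv, log_rpow (by positivity)]
  push_cast
  ring

lemma log_Bj_even_le {n m : ℕ} (hm : m ≠ 0) (hn : n = 2 * m) :
    log (Bj n m) ≤ (1 / 2 - log 2) * n * log n + (3 * log 2 - 1) / 2 * n - log n / 2 + 1 / 2 := by
  have hm₀ : (0 : ℝ) < m := by exact_mod_cast Nat.pos_of_ne_zero hm
  have hncast : (n : ℝ) = 2 * m := by rw [hn]; push_cast; ring
  have hlogn : log n = log 2 + log m := by rw [hncast, log_mul two_ne_zero hm₀.ne']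
  have hratio : log ((m : ℝ) / n) = -log 2 := by
    rw [hncast, div_mul_cancel_right₀ hm₀.ne', log_inv]
  have hupper := Stirling.log_factorial_le_stirling (show n ≠ 0 by omega)
  have hlower := Stirling.le_log_factorial hm
  rw [log_Bj hm (by omega), hratio]
  rw [hlogn, hncast] at hupper ⊢
  linear_combination 2 * hupper + 3 * hlower

lemma log_Bj_odd_le {n m : ℕ} (hm : m ≠ 0) (hn : n = 2 * m + 1) :
    log (Bj n (m + 1)) ≤
      (1 / 2 - log 2) * n * log n + (3 * log 2 - 1) / 2 * n - log n / 2 + 1 / 2 := by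
  have hm₁ : (1 : ℝ) ≤ m := by exact_mod_cast Nat.one_le_iff_ne_zero.mpr hm
  have hncast : (n : ℝ) = 2 * m + 1 := by rw [hn]; push_cast; ring
  have hlog2m : log (2 * (m : ℝ)) = log 2 + log m := log_mul two_ne_zero (by positivity)
  have hlogn_le : log n ≤ log 2 + log m + (2 * (m : ℝ))⁻¹ := by
    rw [hncast, ← hlog2m]; exact log_add_one_le_log_add_inv (by positivity)
  have hlogn_ge : log 2 + log m + (n : ℝ)⁻¹ ≤ log n := by
    rw [hncast, ← hlog2m]; exact log_add_inv_le_log_add_one (by positivity)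
  have hlogn_le' : log n ≤ log 2 + log (m + 1) := by
    rw [← log_mul two_ne_zero (by positivity)]
    exact log_le_log (by rw [hncast]; positivity) (by rw [hncast]; linarith)
  have hlog_succ : log 2 ≤ log (m + 1) := log_le_log two_pos (by linarith)
  have hfact_succ : log (m + 1)! = log (m + 1) + log m ! := by
    rw [Nat.factorial_succ, Nat.cast_mul, log_mul (by positivity) (by positivity)]; push_cast; rfl
  have hupper := Stirling.log_factorial_le_stirling (show n ≠ 0 by omega)
  have hlower := Stirling.le_log_factorial hm
  have hn₀ : (0 : ℝ) < n := by rw [hncast]; positivity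
  have hexponent : n * log n * log ((m : ℝ) / n) ≤ -(log 2 * n * log n) - log n := by
    rw [log_div (by positivity) hn₀.ne']
    have hnlogn : 0 ≤ n * log n := mul_nonneg hn₀.le (log_nonneg (by rw [hncast]; linarith))
    calc n * log n * (log m - log n) ≤ n * log n * (-log 2 - (n : ℝ)⁻¹) :=
          mul_le_mul_of_nonneg_left (by linarith) hnlogn
      _ = -(log 2 * n * log n) - log n := by field_simp
  have hmlog : m * log n ≤ m * log 2 + m * log m + 1 / 2 := by
    calc m * log n ≤ m * (log 2 + log m + (2 * (m : ℝ))⁻¹) := by gcongr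
      _ = m * log 2 + m * log m + 1 / 2 := by field_simp
  have hinv : (2 * (m : ℝ))⁻¹ ≤ 1 / 2 := by rw [one_div]; gcongr; linarith
  have hlog2 := log_two_gt_d9
  rw [log_Bj hm (by omega), hfact_succ]
  set y := log (n : ℝ)
  rw [hncast] at hupper hexponent ⊢
  linarith

lemma log_four_thirds_add_le {x : ℝ} (hx : 9 ≤ x) :
    log (4 / 3) + ((1 / 2 - log 2) * x * log x + (3 * log 2 - 1) / 2 * x - log x / 2 + 1 / 2)
      ≤ 1 - 3 / 1000 * x * log x := by
  have hlog8 : log 8 = 3 * log 2 := by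
    rw [show (8 : ℝ) = 2 ^ 3 by norm_num, log_pow]; push_cast; ring
  have hlogx : 3 * log 2 ≤ log x := hlog8 ▸ log_le_log (by norm_num) (by linarith)
  have hxlogx : x - 8 ≤ x * log x - 3 * log 2 * x := by
    have h := one_sub_inv_le_log_of_pos (show 0 < x / 8 by positivity)
    rw [log_div (by positivity) (by norm_num), hlog8, inv_div] at h
    have := mul_le_mul_of_nonneg_left h (show 0 ≤ x by positivity)
    rw [mul_sub, mul_one, mul_div_cancel₀ _ (by positivity)] at this
    linarith
  have h43 : log (4 / 3) ≤ 1 / 3 := by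
    linarith [log_le_sub_one_of_pos (show (0 : ℝ) < 4 / 3 by norm_num)]
  have hlo := log_two_gt_d9
  have hhi := log_two_lt_d9
  have hxlogx₀ : 0 ≤ x * log x := by nlinarith
  nlinarith [mul_le_mul_of_nonneg_left hlo.le hxlogx₀,
    mul_le_mul_of_nonneg_left hhi.le (show 0 ≤ x by positivity)]

lemma log_Bj_half_le {n : ℕ} (hn : 2 ≤ n) :
    log (Bj n ((n + 1) / 2)) ≤
      (1 / 2 - log 2) * n * log n + (3 * log 2 - 1) / 2 * n - log n / 2 + 1 / 2 := by
  obtain ⟨m, rfl | rfl⟩ := Nat.even_or_odd' n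
  · rw [show (2 * m + 1) / 2 = m by omega]
    exact log_Bj_even_le (by omega) rfl
  · rw [show (2 * m + 1 + 1) / 2 = m + 1 by omega]
    exact log_Bj_odd_le (by omega) rfl

/-- With `B_j = (n!/(n-j)!)² · (1/j!) · (1 - j/n)^{n log n}`, for `n ≥ 9` we have
`Σ_{j=⌈n/2⌉}^{n-1} B_j ≤ exp(1 - (3/1000)·n·log n)`. -/
theorem sum_Bj_le (n : ℕ) (hn : 9 ≤ n) :
    ∑ j ∈ Finset.Icc ((n + 1) / 2) (n - 1),
      ((n.factorial : ℝ) / (n - j).factorial) ^ 2 * (1 / j.factorial)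
        * (1 - (j : ℝ) / n) ^ ((n : ℝ) * Real.log n)
      ≤ Real.exp (1 - (3 / 1000) * n * Real.log n) := by
  have hj₀ : (n + 1) / 2 < n := by omega
  have hIcc : Icc ((n + 1) / 2) (n - 1) = Ico ((n + 1) / 2) n := by
    ext j; simp only [mem_Icc, mem_Ico]; omega
  calc ∑ j ∈ Icc ((n + 1) / 2) (n - 1), Bj n j
      = ∑ j ∈ Ico ((n + 1) / 2) n, Bj n j := by rw [hIcc]
    _ ≤ Bj n ((n + 1) / 2) / (1 - 1 / 4) :=
        sum_Ico_le_div_one_sub_of_le_mul (by norm_num) (by norm_num) (Bj_nonneg hj₀.le)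
          fun j hj hjn => Bj_succ_le (by omega) (by omega)
    _ = exp (log (4 / 3) + log (Bj n ((n + 1) / 2))) := by
        rw [exp_add, exp_log (by norm_num), exp_log (Bj_pos hj₀)]; ring
    _ ≤ exp (1 - 3 / 1000 * n * log n) := exp_le_exp.2 <| by
        linarith [log_Bj_half_le (n := n) (by omega),
          log_four_thirds_add_le (x := n) (by exact_mod_cast hn)]
end

section
/- Let φ(σ) denote the number of fixed points of a permutation σ ∈ S_n. The function f(σ) = √((n-1)/(n-2)) · (φ(σ) - 2) if σ(1) = 1, and f(σ) = √((n-1)/(n-2)) · (φ(σ) - 1 + 1/(n-1)) if σ(1) ≠ 1, is an eigenfunction of the transpose-top-with-random convolution operator with eigenvalue 1 - 1/n, i.e., Σ_τ q(τ) f(στ^{-1}) = (1 - 1/n)·f(σ) for all σ, where q is uniform on {(1,i) : 1 ≤ i ≤ n} (with (1,1) = identity). -/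
/-!
Write `f σ = c · (φ σ + g (σ 1))` with `g 1 = -2` and `g x = -1 + 1/(n-1)` otherwise; the operator
is linear, so the two parts can be averaged separately. Counting, for each point `j`, the `i` for
which `j` is a fixed point of `σ (1 i)` gives `Σ_i φ(σ (1 i)) = 2 + (n-1) φ σ - n [σ 1 = 1]`. Since
`(σ (1 i)) 1 = σ i` runs over all points, `Σ_i g((σ (1 i)) 1) = Σ_x g x = -n`. Both sums combine to
`(n-1) (φ σ + g (σ 1))`.
-/

open Finset Equiv

theorem Fintype.sum_ite_eq_sub_add {α M : Type*} [Fintype α] [DecidableEq α] [AddCommGroup M]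
    (a : α) (u : M) (F : α → M) :
    ∑ x, (if x = a then u else F x) = u - F a + ∑ x, F x := by
  rw [Fintype.sum_eq_add_sum_compl a, Fintype.sum_eq_add_sum_compl a F, if_pos rfl,
    Finset.sum_congr rfl fun x hx => if_neg (by simpa using hx)]
  abel

namespace Equiv.Perm

variable {α : Type*} [Fintype α] [DecidableEq α] (σ : Perm α) (a : α)

theorem sum_ite_mul_swap_apply_eq_self (j : α) :
    ∑ i, (if (σ * swap a i) j = j then (1 : ℝ) else 0) =
      if j = a then (1 : ℝ)
      else (if σ a = j then 1 else 0) + (Fintype.card α - 1) * (if σ j = j then 1 else 0) := by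
  by_cases hj : j = a
  · rw [if_pos hj]
    subst hj
    rw [sum_congr rfl fun i _ => by rw [mul_apply, swap_apply_left]]
    rw [Equiv.sum_comp σ fun x => if x = j then (1 : ℝ) else 0, sum_ite_eq', if_pos (mem_univ j)]
  · rw [if_neg hj]
    have hswap : ∀ i, (if (σ * swap a i) j = j then (1 : ℝ) else 0) =
        if i = j then (if σ a = j then 1 else 0) else (if σ j = j then 1 else 0) := by
      intro i
      by_cases hij : i = j
      · rw [if_pos hij, mul_apply, hij, swap_apply_right]
      · rw [if_neg hij, mul_apply, swap_apply_of_ne_of_ne hj (Ne.symm hij)]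
    rw [sum_congr rfl fun i _ => hswap i, Fintype.sum_ite_eq_sub_add, sum_const, card_univ,
      nsmul_eq_mul]
    ring

theorem sum_card_fixedPoints_mul_swap :
    ∑ i, (#{j | (σ * swap a i) j = j} : ℝ) =
      2 + (Fintype.card α - 1) * #{j | σ j = j} - Fintype.card α * (if σ a = a then 1 else 0) := by
  simp only [natCast_card_filter]
  rw [sum_comm]
  simp only [sum_ite_mul_swap_apply_eq_self]
  rw [Fintype.sum_ite_eq_sub_add, sum_add_distrib, ← mul_sum, sum_ite_eq, if_pos (mem_univ _)]
  ring

end Equiv.Perm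

/-- Let `φ(σ)` be the number of fixed points of `σ ∈ S_n`, `n ≥ 3`.  The function
`f(σ) = √((n-1)/(n-2)) · (φ(σ) - 2)` if `σ(1) = 1`, and
`f(σ) = √((n-1)/(n-2)) · (φ(σ) - 1 + 1/(n-1))` otherwise, is an eigenfunction of the
transpose-top-with-random convolution operator with eigenvalue `1 - 1/n`:
`Σ_τ q(τ) f(στ⁻¹) = (1 - 1/n)·f(σ)`, where `q` is uniform on `{(1,i) : 1 ≤ i ≤ n}`
(with `(1,1)` the identity). -/
theorem transpose_top_eigenfunction (n : ℕ) (hn : 3 ≤ n)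
    (f : Equiv.Perm (Fin n) → ℝ)
    (hf : ∀ σ : Equiv.Perm (Fin n),
      f σ = Real.sqrt (((n : ℝ) - 1) / ((n : ℝ) - 2)) *
        (if σ ⟨0, by omega⟩ = (⟨0, by omega⟩ : Fin n)
          then ((Finset.univ.filter fun i => σ i = i).card : ℝ) - 2
          else ((Finset.univ.filter fun i => σ i = i).card : ℝ) - 1 + 1 / ((n : ℝ) - 1)))
    (σ : Equiv.Perm (Fin n)) :
    ∑ i : Fin n, (1 / (n : ℝ)) * f (σ * (Equiv.swap ⟨0, by omega⟩ i)⁻¹)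
      = (1 - 1 / (n : ℝ)) * f σ := by
  set a : Fin n := ⟨0, by omega⟩
  set c := Real.sqrt (((n : ℝ) - 1) / ((n : ℝ) - 2))
  set g : Fin n → ℝ := fun x => if x = a then -2 else -1 + 1 / ((n : ℝ) - 1)
  have hf' : ∀ π, f π = c * (#{i | π i = i} + g (π a)) := by
    intro π
    rw [hf]
    simp only [g]
    split_ifs <;> ring
  have hn1 : (n : ℝ) - 1 ≠ 0 := by
    have : (3 : ℝ) ≤ n := by exact_mod_cast hn
    linarith
  have hn0 : (n : ℝ) ≠ 0 := by positivity
  have hg : ∑ i, g (σ i) = -n := by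
    rw [Equiv.sum_comp σ g, Fintype.sum_ite_eq_sub_add, sum_const, card_univ, Fintype.card_fin,
      nsmul_eq_mul]
    field_simp
    ring
  calc ∑ i, 1 / (n : ℝ) * f (σ * (swap a i)⁻¹)
      = c / n * (∑ i, (#{j | (σ * swap a i) j = j} : ℝ) + ∑ i, g (σ i)) := by
        simp only [hf', swap_inv, Perm.mul_apply, swap_apply_left, ← sum_add_distrib, mul_sum]
        ring_nf
    _ = c / n * (2 + (n - 1) * #{j | σ j = j} - n * (if σ a = a then 1 else 0) - n) := by
        rw [Perm.sum_card_fixedPoints_mul_swap, hg, Fintype.card_fin]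
        ring
    _ = (1 - 1 / (n : ℝ)) * f σ := by
        rw [hf']
        simp only [g]
        split_ifs <;> field_simp <;> ring
end

section
/- Let φ(σ) be the number of fixed points of σ ∈ S_n. The function φ - 1 is an eigenfunction of the random transposition convolution operator with eigenvalue 1 - 2/n: Σ_τ q(τ)·(φ(στ^{-1}) - 1) = (1 - 2/n)·(φ(σ) - 1) for all σ ∈ S_n, where q assigns probability 1/n to the identity and 2/n² to each transposition. -/
/-!
The measure `q` is the law of `swap i j` for a uniformly random pair `(i, j) ∈ α × α`: the `n`
diagonal pairs give the identity and each transposition arises from exactly two pairs. Only the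
points `i` and `j` can change status, so `fix (σ * swap i j)` equals
`fix σ + [σ j = i] + [σ i = j] - [σ i = i] - [σ j = j]`, and averaging over the `n²` pairs gives
`fix σ + 2/n - (2/n) fix σ`, i.e. `(1 - 2/n) (fix σ - 1) + 1`.
-/

open Finset Equiv Equiv.Perm

theorem Equiv.swap_eq_swap_iff {α : Type*} [DecidableEq α] {a b i j : α} (hab : a ≠ b) :
    swap i j = swap a b ↔ (i = a ∧ j = b) ∨ (i = b ∧ j = a) := by
  constructor
  · intro h
    have hb : swap i j a = b := by rw [h, swap_apply_left]
    rw [swap_apply_def] at hb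
    split_ifs at hb with hai haj
    · exact Or.inl ⟨hai.symm, hb⟩
    · exact Or.inr ⟨hb, haj.symm⟩
    · exact absurd hb hab
  · rintro (⟨rfl, rfl⟩ | ⟨rfl, rfl⟩)
    · rfl
    · exact swap_comm i j

section

variable {α : Type*} [Fintype α] [DecidableEq α]

open scoped Classical in
theorem card_filter_swap_eq (τ : Perm α) :
    #{p : α × α | swap p.1 p.2 = τ} =
      if τ = 1 then Fintype.card α else if τ.IsSwap then 2 else 0 := by
  split_ifs with h1 hswap
  · subst h1
    simp only [swap_eq_one_iff]
    simpa [diag_eq_filter] using diag_card (univ : Finset α)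
  · obtain ⟨a, b, hab, rfl⟩ := hswap
    have hfiber : ({p : α × α | swap p.1 p.2 = swap a b} : Finset (α × α)) = {(a, b), (b, a)} := by
      ext ⟨i, j⟩
      simp [swap_eq_swap_iff hab]
    rw [hfiber, card_pair (by simp [hab])]
  · rw [card_eq_zero, filter_eq_empty_iff]
    rintro ⟨i, j⟩ - rfl
    by_cases hij : i = j
    · exact h1 (swap_eq_one_iff.2 hij)
    · exact hswap ⟨i, j, hij, rfl⟩

open scoped Classical in
noncomputable def randomTransposition (τ : Perm α) : ℝ :=
  if τ = 1 then 1 / Fintype.card α else if τ.IsSwap then 2 / (Fintype.card α : ℝ) ^ 2 else 0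

theorem sum_randomTransposition_mul (f : Perm α → ℝ) :
    ∑ τ, randomTransposition τ * f τ = (∑ i, ∑ j, f (swap i j)) / (Fintype.card α : ℝ) ^ 2 := by
  rw [← Fintype.sum_prod_type', ← sum_fiberwise' univ (fun p : α × α => swap p.1 p.2), sum_div]
  refine sum_congr rfl fun τ _ => ?_
  rw [sum_const, card_filter_swap_eq, randomTransposition, nsmul_eq_mul]
  split_ifs
  · rcases eq_or_ne (Fintype.card α : ℝ) 0 with h | h
    · simp [h]
    · field_simp
  · push_cast
    ring
  · simp

theorem card_fixedPoints_mul_swap_add (σ : Perm α) (i j : α) :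
    #{x | (σ * swap i j) x = x} + ((if σ i = i then 1 else 0) + if σ j = j then 1 else 0) =
      #{x | σ x = x} + ((if σ j = i then 1 else 0) + if σ i = j then 1 else 0) := by
  rcases eq_or_ne i j with rfl | hij
  · by_cases h : σ i = i <;> simp [h]
  · have hcompl : ∑ x ∈ {i, j}ᶜ, (if (σ * swap i j) x = x then 1 else 0) =
        ∑ x ∈ {i, j}ᶜ, if σ x = x then 1 else 0 := by
      refine sum_congr rfl fun x hx => ?_
      simp only [mem_compl, mem_insert, mem_singleton, not_or] at hx
      simp only [Perm.mul_apply, swap_apply_of_ne_of_ne hx.1 hx.2]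
    rw [card_filter, card_filter,
      ← sum_add_sum_compl {i, j} (fun x => if (σ * swap i j) x = x then 1 else 0),
      ← sum_add_sum_compl {i, j} (fun x => if σ x = x then 1 else 0), sum_pair hij, sum_pair hij,
      hcompl]
    simp only [Perm.mul_apply, swap_apply_left, swap_apply_right]
    ring

theorem sum_sum_card_fixedPoints_mul_swap (σ : Perm α) :
    ∑ i : α, ∑ j : α, (#{x | (σ * swap i j) x = x} : ℝ) =
      Fintype.card α * ((Fintype.card α - 2) * #{x | σ x = x} + 2) := by
  have hpair (i j : α) : (#{x | (σ * swap i j) x = x} : ℝ) =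
      #{x | σ x = x} + ((if σ j = i then 1 else 0) + (if σ i = j then 1 else 0)) -
        ((if σ i = i then 1 else 0) + if σ j = j then 1 else 0) := by
    rw [eq_sub_iff_add_eq]
    exact_mod_cast card_fixedPoints_mul_swap_add σ i j
  have hji : ∑ i, ∑ j, (if σ j = i then 1 else 0 : ℝ) = Fintype.card α := by
    rw [sum_comm]
    simp
  have hij : ∑ i, ∑ j, (if σ i = j then 1 else 0 : ℝ) = Fintype.card α := by simp
  have hii : ∑ i : α, ∑ _j : α, (if σ i = i then 1 else 0 : ℝ) =
      Fintype.card α * #{x | σ x = x} := by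
    simp only [sum_const, card_univ, nsmul_eq_mul, ← mul_sum, sum_boole]
  have hjj : ∑ _i : α, ∑ j, (if σ j = j then 1 else 0 : ℝ) = Fintype.card α * #{x | σ x = x} := by
    simp
  simp only [hpair, sum_sub_distrib, sum_add_distrib]
  rw [hji, hij, hii, hjj]
  simp only [sum_const, card_univ, nsmul_eq_mul]
  ring

end

open scoped Classical in
/-- Let `φ(σ)` be the number of fixed points of `σ ∈ S_n`, `n ≥ 2`.  The function
`φ - 1` is an eigenfunction of the random transposition convolution operator with
eigenvalue `1 - 2/n`: `Σ_τ q(τ)·(φ(στ⁻¹) - 1) = (1 - 2/n)·(φ(σ) - 1)`, where `q`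
assigns probability `1/n` to the identity and `2/n²` to each transposition. -/
theorem random_transposition_eigenfunction (n : ℕ) (hn : 2 ≤ n)
    (σ : Equiv.Perm (Fin n)) :
    ∑ τ : Equiv.Perm (Fin n),
        (if τ = 1 then 1 / (n : ℝ) else if τ.IsSwap then 2 / (n : ℝ) ^ 2 else 0) *
          (((Finset.univ.filter fun i => (σ * τ⁻¹) i = i).card : ℝ) - 1)
      = (1 - 2 / (n : ℝ)) *
          (((Finset.univ.filter fun i => σ i = i).card : ℝ) - 1) := by
  have hn0 : (n : ℝ) ≠ 0 := Nat.cast_ne_zero.2 (by omega)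
  have hsum := sum_randomTransposition_mul fun τ : Perm (Fin n) => (#{x | (σ * τ⁻¹) x = x} : ℝ) - 1
  simp only [randomTransposition, Fintype.card_fin] at hsum
  rw [hsum]
  simp only [sum_sub_distrib, sum_const, card_univ, Fintype.card_fin, nsmul_eq_mul, mul_one]
  -- `(swap i j)⁻¹` is `swap i j` only up to `rfl`
  erw [sum_sum_card_fixedPoints_mul_swap, Fintype.card_fin]
  field_simp
  ring
end
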